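/- arXiv:2004.00731 — 4 statements merged into one kernel-verified Lean document; each statement's English description precedes it below -/
import Mathlib

section
/- Let C be a category with pullbacks and let α : g ⟶ f be a cartesian morphism in the arrow category. Then the induced morphism between the diagonals Δg ⟶ Δf is also cartesian, where for h : X ⟶ Y the diagonal Δh : X ⟶ X ×_Y X is the canonical map. -/
/-!
Write `m : X' ×_{Y'} X' ⟶ X ×_Y X` for the map induced by the square. A cone over
`Δf` and `m` is a pair `a, b : T ⟶ X'` with `a ≫ g = b ≫ g` and `a ≫ l = b ≫ l`. The square
of diagonals is cartesian exactly when every such pair has `a = b`, i.e. when `l` and `g` are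
jointly monic, which holds for the two legs of any pullback square.
-/

open CategoryTheory Limits

namespace CategoryTheory

variable {C : Type*} [Category C]

section PullbackMap

variable {W X Y Z S T : C} (f₁ : W ⟶ S) (f₂ : X ⟶ S) [HasPullback f₁ f₂] (g₁ : Y ⟶ T)
  (g₂ : Z ⟶ T) [HasPullback g₁ g₂] (i₁ : W ⟶ Y) (i₂ : X ⟶ Z) (i₃ : S ⟶ T)
  (eq₁ : f₁ ≫ i₃ = i₁ ≫ g₁) (eq₂ : f₂ ≫ i₃ = i₂ ≫ g₂)

@[simp]
lemma Limits.pullback.map_fst :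
    pullback.map f₁ f₂ g₁ g₂ i₁ i₂ i₃ eq₁ eq₂ ≫ pullback.fst g₁ g₂ = pullback.fst f₁ f₂ ≫ i₁ :=
  pullback.lift_fst _ _ _

@[simp]
lemma Limits.pullback.map_snd :
    pullback.map f₁ f₂ g₁ g₂ i₁ i₂ i₃ eq₁ eq₂ ≫ pullback.snd g₁ g₂ = pullback.snd f₁ f₂ ≫ i₂ :=
  pullback.lift_snd _ _ _

end PullbackMap

variable {X' Y' X Y : C} {g : X' ⟶ Y'} {f : X ⟶ Y} {l : X' ⟶ X} {r : Y' ⟶ Y}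

lemma IsPullback.jointlyMono₂ (h : IsPullback l g f r) : JointlyMono₂ l g :=
  ⟨fun _ _ _ => h.hom_ext⟩

variable [HasPullbacks C]

lemma Limits.pullback.diagonal_comp_map (w : l ≫ f = g ≫ r) :
    pullback.diagonal g ≫ pullback.map g g f f l l r w.symm w.symm =
      l ≫ pullback.diagonal f := by
  ext <;> simp

lemma isPullback_diagonal_of_jointlyMono₂ [hlg : JointlyMono₂ l g] (w : l ≫ f = g ≫ r) :
    IsPullback l (pullback.diagonal g) (pullback.diagonal f)
      (pullback.map g g f f l l r w.symm w.symm) := by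
  have legs (s : PullbackCone (pullback.diagonal f) (pullback.map g g f f l l r w.symm w.symm)) :
      s.snd ≫ pullback.fst g g ≫ l = s.fst ∧ s.snd ≫ pullback.snd g g ≫ l = s.fst :=
    ⟨by simpa using (s.condition =≫ pullback.fst f f).symm,
      by simpa using (s.condition =≫ pullback.snd f f).symm⟩
  refine ⟨⟨(pullback.diagonal_comp_map w).symm⟩,
    ⟨PullbackCone.IsLimit.mk _ (fun s => s.snd ≫ pullback.fst g g) (fun s => ?_) (fun s => ?_)
      (fun s m _ hm => by rw [← hm, Category.assoc, pullback.diagonal_fst, Category.comp_id])⟩⟩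
  · simpa using (legs s).1
  · have hsame : s.snd ≫ pullback.fst g g = s.snd ≫ pullback.snd g g :=
      hlg.right_cancellation _ _ (by simp only [Category.assoc, (legs s).1, (legs s).2])
        (by simp only [Category.assoc, pullback.condition])
    ext
    · simp
    · simpa using hsame

end CategoryTheory

theorem stmt9 {C : Type*} [Category C] [HasPullbacks C] {X' Y' X Y : C}
    (g : X' ⟶ Y') (f : X ⟶ Y) (l : X' ⟶ X) (r : Y' ⟶ Y)
    (h : IsPullback l g f r) :
    IsPullback l (pullback.diagonal g) (pullback.diagonal f)
      (pullback.map g g f f l l r h.w.symm h.w.symm) :=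
  have := h.jointlyMono₂
  isPullback_diagonal_of_jointlyMono₂ h.w
end

section
/- Let (L, R) be a factorization system on a category C with terminal object, and suppose L is stable under base change (i.e. (L,R) is a modality). Let P : C ⟶ C denote the reflection sending X to the middle object of the (L,R)-factorization of X ⟶ 1, with unit η_X : X ⟶ P X in L and P X ⟶ 1 in R. Then for any map X ⟶ Y, the factorization X ⟶ Z ⟶ Y with Z = Y ×_{P Y} P X has X ⟶ Z in the 2-out-of-3 closure of L and Z ⟶ Y a base change of P X ⟶ P Y. -/
open CategoryTheory Limits

/-!
The composite of `X ⟶ Y ×_{P Y} P X` with the projection to `P X` is `η_X`, which lies in `L`;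
the projection is a base change of `η_Y`, so it lies in `L` as well, and left cancellation puts
`X ⟶ Y ×_{P Y} P X` in the 2-out-of-3 closure of `L`.
-/

/-- Orthogonality `f ⊥ g`: unique diagonal fillers. -/
def Orth {C : Type*} [Category C] {A B X Y : C} (f : A ⟶ B) (g : X ⟶ Y) : Prop :=
  ∀ (u : A ⟶ X) (v : B ⟶ Y), u ≫ g = f ≫ v →
    ∃! d : B ⟶ X, f ≫ d = u ∧ d ≫ g = v

/-- `Wᗮ`. -/
def rOrth {C : Type*} [Category C] (W : MorphismProperty C) : MorphismProperty C :=
  fun _ _ g => ∀ ⦃A B : C⦄ (w : A ⟶ B), W w → Orth w g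

/-- `ᗮW`. -/
def lOrth {C : Type*} [Category C] (W : MorphismProperty C) : MorphismProperty C :=
  fun _ _ f => ∀ ⦃X Y : C⦄ (g : X ⟶ Y), W g → Orth f g

/-- An orthogonal factorization system. -/
structure OFS (C : Type*) [Category C] where
  L : MorphismProperty C
  R : MorphismProperty C
  R_eq : R = rOrth L
  L_eq : L = lOrth R
  fac : ∀ {X Y : C} (f : X ⟶ Y),
    ∃ (Z : C) (l : X ⟶ Z) (r : Z ⟶ Y), L l ∧ R r ∧ l ≫ r = f

/-- The 2-out-of-3 closure of a class of maps. -/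
inductive TwoOutOfThree {C : Type*} [Category C] (L : MorphismProperty C) :
    ∀ ⦃X Y : C⦄, (X ⟶ Y) → Prop
  | of {X Y : C} (f : X ⟶ Y) : L f → TwoOutOfThree L f
  | comp {X Y Z : C} (f : X ⟶ Y) (g : Y ⟶ Z) :
      TwoOutOfThree L f → TwoOutOfThree L g → TwoOutOfThree L (f ≫ g)
  | cancel_left {X Y Z : C} (f : X ⟶ Y) (g : Y ⟶ Z) :
      TwoOutOfThree L f → TwoOutOfThree L (f ≫ g) → TwoOutOfThree L g
  | cancel_right {X Y Z : C} (f : X ⟶ Y) (g : Y ⟶ Z) :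
      TwoOutOfThree L g → TwoOutOfThree L (f ≫ g) → TwoOutOfThree L f

theorem CategoryTheory.MorphismProperty.isStableUnderBaseChange_of_isPullback_fst {C : Type*} [Category C]
    (W : MorphismProperty C)
    (hW : ∀ ⦃P X Y Z : C⦄ (fst : P ⟶ X) (snd : P ⟶ Y) (a : X ⟶ Z) (b : Y ⟶ Z),
      IsPullback fst snd a b → W b → W fst) :
    W.IsStableUnderBaseChange :=
  ⟨fun sq hg => hW _ _ _ _ sq.flip hg⟩

theorem TwoOutOfThree.of_comp_of_mem {C : Type*} [Category C] {L : MorphismProperty C}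
    {X Y Z : C} {f : X ⟶ Y} {g : Y ⟶ Z} (hg : L g) (hfg : L (f ≫ g)) :
    TwoOutOfThree L f :=
  .cancel_right f g (.of g hg) (.of _ hfg)

theorem stmt13_general {C : Type*} [Category C] [HasPullbacks C] (S : OFS C)
    (hL : ∀ ⦃P X Y Z : C⦄ (fst : P ⟶ X) (snd : P ⟶ Y) (a : X ⟶ Z) (b : Y ⟶ Z),
      IsPullback fst snd a b → S.L b → S.L fst)
    {X Y PX PY : C} (f : X ⟶ Y) (ηX : X ⟶ PX) (ηY : Y ⟶ PY) (Pf : PX ⟶ PY)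
    (hηX : S.L ηX) (hηY : S.L ηY)
    (hnat : f ≫ ηY = ηX ≫ Pf) :
    TwoOutOfThree S.L (pullback.lift f ηX hnat : X ⟶ pullback ηY Pf) ∧
    IsPullback (pullback.snd ηY Pf) (pullback.fst ηY Pf) Pf ηY := by
  have := MorphismProperty.isStableUnderBaseChange_of_isPullback_fst S.L hL
  have hsnd : S.L (pullback.snd ηY Pf) := MorphismProperty.pullback_snd ηY Pf hηY
  refine ⟨.of_comp_of_mem hsnd ?_, (IsPullback.of_hasPullback ηY Pf).flip⟩
  rwa [pullback.lift_snd]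

theorem stmt13 {C : Type*} [Category C] [HasTerminal C] [HasPullbacks C] (S : OFS C)
    (hL : ∀ ⦃P X Y Z : C⦄ (fst : P ⟶ X) (snd : P ⟶ Y) (a : X ⟶ Z) (b : Y ⟶ Z),
      IsPullback fst snd a b → S.L b → S.L fst)
    {X Y PX PY : C} (f : X ⟶ Y) (ηX : X ⟶ PX) (ηY : Y ⟶ PY) (Pf : PX ⟶ PY)
    (hηX : S.L ηX) (hηY : S.L ηY)
    (hPX : S.R (terminal.from PX)) (hPY : S.R (terminal.from PY))
    (hnat : f ≫ ηY = ηX ≫ Pf) :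
    TwoOutOfThree S.L (pullback.lift f ηX hnat : X ⟶ pullback ηY Pf) ∧
    IsPullback (pullback.snd ηY Pf) (pullback.fst ηY Pf) Pf ηY :=
  stmt13_general S hL f ηX ηY Pf hηX hηY hnat
end

section
/- Let (L,R) be a modality on a category C with finite limits and terminal object, with associated reflection P : C ⟶ R₁ into the subcategory of modal objects (those X with X ⟶ 1 in R). Then P is semi-left-exact: P preserves every pullback square whose bottom-right cospan consists of a map in R₁ and a map of the form obtained by pulling back along maps between modal objects; concretely, for any map X ⟶ Y in C, P preserves the pullback of P X ⟶ P Y along Y ⟶ P Y. -/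
/-!
The reflection `P` inverts every map in `L`: maps in `L` induce bijections on maps into
modal objects, so the inverse of `P l` is obtained by extending `η` first along `l`, then
along the unit. In the square, `η_Y` is in `L`, and so is its base change along `P f`;
`P` turns both vertical maps into isomorphisms, and a commutative square with two parallel
isomorphisms is a pullback.
-/

open CategoryTheory Limits

namespace OFS

variable {C : Type*} [Category C] (S : OFS C)

theorem orth_of_L_of_R {A B X Y : C} {l : A ⟶ B} {r : X ⟶ Y} (hl : S.L l) (hr : S.R r) :
    Orth l r := by
  rw [S.R_eq] at hr
  exact hr l hl

theorem existsUnique_comp_eq [HasTerminal C] {A B M : C} {l : A ⟶ B} (hl : S.L l)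
    (hM : S.R (terminal.from M)) (u : A ⟶ M) : ∃! d : B ⟶ M, l ≫ d = u := by
  obtain ⟨d, ⟨hd, -⟩, hd_unique⟩ :=
    S.orth_of_L_of_R hl hM u (terminal.from B) (Subsingleton.elim _ _)
  exact ⟨d, hd, fun d' hd' => hd_unique d' ⟨hd', Subsingleton.elim _ _⟩⟩

theorem cancel_L [HasTerminal C] {A B M : C} {l : A ⟶ B} (hl : S.L l)
    (hM : S.R (terminal.from M)) {d d' : B ⟶ M} (h : l ≫ d = l ≫ d') : d = d' :=
  (S.existsUnique_comp_eq hl hM (l ≫ d')).unique h rfl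

theorem isIso_map_of_L [HasTerminal C] (P : C ⥤ C) (η : 𝟭 C ⟶ P) (hη : ∀ X : C, S.L (η.app X))
    (hR : ∀ X : C, S.R (terminal.from (P.obj X))) {A B : C} {l : A ⟶ B} (hl : S.L l) :
    IsIso (P.map l) := by
  have hnat : l ≫ η.app B = η.app A ≫ P.map l := η.naturality l
  obtain ⟨d, hd, -⟩ := S.existsUnique_comp_eq hl (hR A) (η.app A)
  obtain ⟨e, he, -⟩ := S.existsUnique_comp_eq (hη B) (hR A) d
  refine ⟨e, S.cancel_L (hη A) (hR A) ?_, S.cancel_L (hη B) (hR B) ?_⟩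
  · rw [← Category.assoc, ← hnat, Category.assoc, he, hd, Category.comp_id]
  · refine S.cancel_L hl (hR B) ?_
    rw [reassoc_of% he, reassoc_of% hd, Category.comp_id, hnat]

end OFS

theorem stmt14_general {C : Type*} [Category C] [HasTerminal C] [HasPullbacks C] (S : OFS C)
    (hL : ∀ ⦃P X Y Z : C⦄ (fst : P ⟶ X) (snd : P ⟶ Y) (a : X ⟶ Z) (b : Y ⟶ Z),
      IsPullback fst snd a b → S.L b → S.L fst)
    (P : C ⥤ C) (η : 𝟭 C ⟶ P)
    (hη : ∀ X : C, S.L (η.app X))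
    (hR : ∀ X : C, S.R (terminal.from (P.obj X)))
    {X Y : C} (f : X ⟶ Y) :
    IsPullback (P.map (pullback.fst (η.app Y) (P.map f)))
      (P.map (pullback.snd (η.app Y) (P.map f)))
      (P.map (η.app Y)) (P.map (P.map f)) := by
  have hpb := IsPullback.of_hasPullback (η.app Y) (P.map f)
  have : IsIso (P.map (η.app Y)) := S.isIso_map_of_L P η hη hR (hη Y)
  have : IsIso (P.map (pullback.snd (η.app Y) (P.map f))) :=
    S.isIso_map_of_L P η hη hR (hL _ _ _ _ hpb.flip (hη Y))
  exact IsPullback.of_vert_isIso (hpb.toCommSq.map P)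

/-- Semi-left-exactness of the reflection associated to a modality: `P` preserves the
pullback of `P X ⟶ P Y` along `Y ⟶ P Y`. -/
theorem stmt14 {C : Type*} [Category C] [HasTerminal C] [HasPullbacks C] (S : OFS C)
    (hL : ∀ ⦃P X Y Z : C⦄ (fst : P ⟶ X) (snd : P ⟶ Y) (a : X ⟶ Z) (b : Y ⟶ Z),
      IsPullback fst snd a b → S.L b → S.L fst)
    (P : C ⥤ C) (η : 𝟭 C ⟶ P)
    (hη : ∀ X : C, S.L (η.app X))
    (hR : ∀ X : C, S.R (terminal.from (P.obj X)))
    (hidem : ∀ X : C, IsIso (η.app (P.obj X)))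
    {X Y : C} (f : X ⟶ Y) :
    IsPullback (P.map (pullback.fst (η.app Y) (P.map f)))
      (P.map (pullback.snd (η.app Y) (P.map f)))
      (P.map (η.app Y)) (P.map (P.map f)) :=
  stmt14_general S hL P η hη hR f
end

section
/- Let C be a category with finite limits, let L be a class of maps containing all isomorphisms, closed under composition, stable under base change, and satisfying right cancellation (if g∘f and f are in L then g is in L), and suppose L contains the diagonal Δw of every w ∈ W for some class W ⊆ L. Then for any pullback f ⟶ g ⟵ h of maps f, g, h ∈ W (a cospan in the arrow category whose limit is taken), the induced map between pullbacks, i.e. the fiber product f ×_g h in Arrow C, lies in L, provided L additionally contains base changes of the maps in W and of their diagonals. -/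
/-!
The map `A₁ ×_{A₂} A₃ ⟶ B₁ ×_{B₂} B₃` factors as
`A₁ ×_{A₂} A₃ ⟶ A₁ ×_{B₂} A₃ ⟶ B₁ ×_{B₂} B₃`. The first map is a base change of the diagonal
`A₂ ⟶ A₂ ×_{B₂} A₂` of `g`, and the second is `f ×_{B₂} h`, a composite of base changes of `f`
and of `h`.
-/

open CategoryTheory Limits

namespace CategoryTheory.MorphismProperty

variable {C : Type*} [Category C] [HasPullbacks C] {P : MorphismProperty C}

lemma pullbackMap_of_diagonal [P.IsStableUnderBaseChange] [P.IsStableUnderComposition]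
    {A₁ B₁ A₂ B₂ A₃ B₃ : C} {f : A₁ ⟶ B₁} {g : A₂ ⟶ B₂} {h : A₃ ⟶ B₃}
    {u₁ : A₁ ⟶ A₂} {u₃ : A₃ ⟶ A₂} {v₁ : B₁ ⟶ B₂} {v₃ : B₃ ⟶ B₂}
    (e₁ : u₁ ≫ g = f ≫ v₁) (e₃ : u₃ ≫ g = h ≫ v₃)
    (hf : P f) (hg : P.diagonal g) (hh : P h) :
    P (pullback.map u₁ u₃ v₁ v₃ f h g e₁ e₃) := by
  have hfactor : pullback.map u₁ u₃ v₁ v₃ f h g e₁ e₃ =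
      pullback.map u₁ u₃ (u₁ ≫ g) (u₃ ≫ g) (𝟙 _) (𝟙 _) g
          (Category.id_comp _).symm (Category.id_comp _).symm ≫
        pullback.map (u₁ ≫ g) (u₃ ≫ g) v₁ v₃ f h (𝟙 _)
          ((Category.comp_id _).trans e₁) ((Category.comp_id _).trans e₃) := by
    rw [pullback.map_comp]
    simp
  rw [hfactor]
  exact P.comp_mem _ _
    (P.of_isPullback (pullback_map_diagonal_isPullback u₁ u₃ g) hg)
    (P.pullbackMap hf hh e₁ e₃)

end CategoryTheory.MorphismProperty

theorem stmt16_general {C : Type*} [Category C] [HasFiniteLimits C]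
    (L W : MorphismProperty C)
    (hWL : ∀ ⦃X Y : C⦄ (w : X ⟶ Y), W w → L w)
    (hcomp : ∀ ⦃X Y Z : C⦄ (a : X ⟶ Y) (b : Y ⟶ Z), L a → L b → L (a ≫ b))
    (hbc : ∀ ⦃P X Y Z : C⦄ (fst : P ⟶ X) (snd : P ⟶ Y) (a : X ⟶ Z) (b : Y ⟶ Z),
      IsPullback fst snd a b → L b → L fst)
    (hdiag : ∀ ⦃X Y : C⦄ (w : X ⟶ Y), W w → L (pullback.diagonal w))
    -- the cospan `f ⟶ g ⟵ h` in the arrow category: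
    {A₁ B₁ A₂ B₂ A₃ B₃ : C}
    (f : A₁ ⟶ B₁) (g : A₂ ⟶ B₂) (h : A₃ ⟶ B₃)
    (hf : W f) (hg : W g) (hh : W h)
    (u₁ : A₁ ⟶ A₂) (u₃ : A₃ ⟶ A₂) (v₁ : B₁ ⟶ B₂) (v₃ : B₃ ⟶ B₂)
    (e₁ : u₁ ≫ g = f ≫ v₁) (e₃ : u₃ ≫ g = h ≫ v₃) :
    L (pullback.map u₁ u₃ v₁ v₃ f h g
        e₁ e₃) := by
  have : L.IsStableUnderBaseChange := ⟨fun sq hb ↦ hbc _ _ _ _ sq.flip hb⟩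
  have : L.IsStableUnderComposition := ⟨fun a b ↦ hcomp a b⟩
  exact MorphismProperty.pullbackMap_of_diagonal e₁ e₃ (hWL f hf) (hdiag g hg) (hWL h hh)

theorem stmt16 {C : Type*} [Category C] [HasFiniteLimits C]
    (L W : MorphismProperty C)
    (hWL : ∀ ⦃X Y : C⦄ (w : X ⟶ Y), W w → L w)
    (hiso : ∀ ⦃X Y : C⦄ (e : X ⟶ Y), IsIso e → L e)
    (hcomp : ∀ ⦃X Y Z : C⦄ (a : X ⟶ Y) (b : Y ⟶ Z), L a → L b → L (a ≫ b))
    (hbc : ∀ ⦃P X Y Z : C⦄ (fst : P ⟶ X) (snd : P ⟶ Y) (a : X ⟶ Z) (b : Y ⟶ Z),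
      IsPullback fst snd a b → L b → L fst)
    (hcancel : ∀ ⦃X Y Z : C⦄ (a : X ⟶ Y) (b : Y ⟶ Z), L (a ≫ b) → L a → L b)
    (hdiag : ∀ ⦃X Y : C⦄ (w : X ⟶ Y), W w → L (pullback.diagonal w))
    -- the cospan `f ⟶ g ⟵ h` in the arrow category:
    {A₁ B₁ A₂ B₂ A₃ B₃ : C}
    (f : A₁ ⟶ B₁) (g : A₂ ⟶ B₂) (h : A₃ ⟶ B₃)
    (hf : W f) (hg : W g) (hh : W h)
    (u₁ : A₁ ⟶ A₂) (u₃ : A₃ ⟶ A₂) (v₁ : B₁ ⟶ B₂) (v₃ : B₃ ⟶ B₂)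
    (e₁ : u₁ ≫ g = f ≫ v₁) (e₃ : u₃ ≫ g = h ≫ v₃) :
    L (pullback.map u₁ u₃ v₁ v₃ f h g
        e₁ e₃) :=
  stmt16_general L W hWL hcomp hbc hdiag f g h hf hg hh u₁ u₃ v₁ v₃ e₁ e₃
end
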